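/- arXiv:1810.09372 — 2 statements merged into one kernel-verified Lean document; each statement's English description precedes it below -/
import Mathlib

section
/- Let p2 > 2 and define f : ℝ → ℝ by f(s) := min{|s|, |s|^{p2−1}}, with F(s) := ∫₀^s f(t) dt. Then: (i) for every p1 with 2 < p1 < p2, one has 0 < f(s) ≤ min{s^{p1−1}, s^{p2−1}} for all s > 0; (ii) s ↦ f(s)/s is nondecreasing on (0, ∞); (iii) s ↦ F(s)/s^{p2} is nonincreasing on (0, 1); (iv) s ↦ f(s)/s is NOT strictly increasing on (0, ∞). -/
open Real Set

noncomputable section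

/-- `F(s) = ∫₀ˢ f(t) dt`. -/
def Fprim (f : ℝ → ℝ) (s : ℝ) : ℝ := ∫ t in (0:ℝ)..s, f t

/-- The nonlinearity `f(s) = min{|s|, |s|^{p₂-1}}` satisfies the hypotheses (h₀), (h'₁)
and (h'₂) of the improved theorem (with `μ = p₂`, `s* = 1`), but `f(s)/s` is not strictly
increasing on `(0,∞)`. -/
theorem example_min_power
    (p2 : ℝ) (hp2 : 2 < p2)
    (f : ℝ → ℝ) (hf : f = fun s => min |s| (|s| ^ (p2 - 1))) :
    (∀ p1 : ℝ, 2 < p1 → p1 < p2 → ∀ s : ℝ, 0 < s →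
      0 < f s ∧ f s ≤ min (s ^ (p1 - 1)) (s ^ (p2 - 1))) ∧
    MonotoneOn (fun s => f s / s) (Ioi (0:ℝ)) ∧
    AntitoneOn (fun s => Fprim f s / s ^ p2) (Ioo (0:ℝ) 1) ∧
    ¬ StrictMonoOn (fun s => f s / s) (Ioi (0:ℝ)) := by
  subst hf
  -- key formula for f s / s
  have hkey : ∀ s : ℝ, 0 < s →
      min |s| (|s| ^ (p2 - 1)) / s = min 1 (s ^ (p2 - 2)) := by
    intro s hs
    have h1 : s ^ (p2 - 1) / s = s ^ (p2 - 2) := by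
      rw [show p2 - 2 = p2 - 1 - 1 by ring, Real.rpow_sub hs (p2 - 1) 1, Real.rpow_one]
    rw [abs_of_pos hs, ← min_div_div_right hs.le, div_self hs.ne', h1]
  refine ⟨?_, ?_, ?_, ?_⟩
  · intro p1 hp1 hp12 s hs
    simp only [abs_of_pos hs]
    constructor
    · exact lt_min hs (Real.rpow_pos_of_pos hs _)
    · refine le_min ?_ (min_le_right _ _)
      rcases le_or_gt s 1 with h | h
      · exact (min_le_right _ _).trans
          (Real.rpow_le_rpow_of_exponent_ge hs h (by linarith))
      · exact (min_le_left _ _).trans (by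
          calc s = s ^ (1:ℝ) := (Real.rpow_one s).symm
          _ ≤ s ^ (p1 - 1) := Real.rpow_le_rpow_of_exponent_le h.le (by linarith))
  · intro a ha b hb hab
    simp only [hkey a ha, hkey b hb]
    exact min_le_min le_rfl
      (Real.rpow_le_rpow (le_of_lt ha) hab (by linarith))
  · -- F(s)/s^p2 is constant (= 1/p2) on (0,1)
    have hF : ∀ s : ℝ, 0 < s → s < 1 →
        Fprim (fun s => min |s| (|s| ^ (p2 - 1))) s / s ^ p2 = 1 / p2 := by
      intro s hs hs1
      have hcongr : Fprim (fun s => min |s| (|s| ^ (p2 - 1))) s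
          = ∫ t in (0:ℝ)..s, t ^ (p2 - 1) := by
        unfold Fprim
        refine intervalIntegral.integral_congr ?_
        intro t ht
        rw [uIcc_of_le hs.le] at ht
        obtain ⟨ht0, hts⟩ := ht
        simp only [abs_of_nonneg ht0]
        rcases eq_or_lt_of_le ht0 with h0 | h0
        · rw [← h0, Real.zero_rpow (ne_of_gt (show (0:ℝ) < p2 - 1 by linarith)), min_self]
        · have h := Real.rpow_le_rpow_of_exponent_ge h0 (hts.trans hs1.le)
            (show (1:ℝ) ≤ p2 - 1 by linarith)
          rw [Real.rpow_one] at h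
          exact min_eq_right h
      have hint : ∫ t in (0:ℝ)..s, t ^ (p2 - 1) = s ^ p2 / p2 := by
        rw [integral_rpow (Or.inl (by linarith))]
        rw [show p2 - 1 + 1 = p2 by ring,
          Real.zero_rpow (by positivity : p2 ≠ 0)]
        ring
      rw [hcongr, hint]
      have hsp : (0:ℝ) < s ^ p2 := Real.rpow_pos_of_pos hs _
      field_simp
    intro a ha b hb _
    dsimp only
    rw [hF a ha.1 ha.2, hF b hb.1 hb.2]
  · intro hmono
    have h2 : (1:ℝ) ≤ (2:ℝ) ^ (p2 - 2) :=
      Real.one_le_rpow one_le_two (by linarith)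
    have := hmono (by norm_num : (1:ℝ) ∈ Ioi (0:ℝ))
      (by norm_num : (2:ℝ) ∈ Ioi (0:ℝ)) one_lt_two
    simp only [hkey 1 one_pos, hkey 2 two_pos] at this
    rw [Real.one_rpow, min_self, min_eq_left h2] at this
    exact lt_irrefl _ this
end
end

section
/- Let p2 > 2 and define f : ℝ → ℝ by f(s) := |s|^{p2−1}/(1 + |s|^{p2−2}), with F(s) := ∫₀^s f(t) dt. Then: (i) for every p1 with 2 < p1 < p2, one has 0 < f(s) ≤ min{s^{p1−1}, s^{p2−1}} for all s > 0; (ii) s ↦ f(s)/s is nondecreasing on (0, ∞); (iii) s ↦ F(s)/s^{p2} is nonincreasing on (0, ∞); (iv) there is NO η > 2 such that s ↦ F(s)/s^η is nondecreasing on (0, ∞) (equivalently, no η > 2 with ηF(s) ≤ f(s)s for all s > 0). -/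
open Real Set

noncomputable section

/-- The nonlinearity `f(s) = |s|^{p₂-1}/(1+|s|^{p₂-2})` satisfies the hypotheses (h₀),
(h'₁) and (h'₂) of the improved theorem (with `μ = p₂` and any `s* > 0`), but fails the
Ambrosetti–Rabinowitz condition: there is no `η > 2` with `F(s)/s^η` nondecreasing on
`(0,∞)`. -/
theorem example_asymptotically_linear_power
    (p2 : ℝ) (hp2 : 2 < p2)
    (f : ℝ → ℝ) (hf : f = fun s => |s| ^ (p2 - 1) / (1 + |s| ^ (p2 - 2))) :
    (∀ p1 : ℝ, 2 < p1 → p1 < p2 → ∀ s : ℝ, 0 < s →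
      0 < f s ∧ f s ≤ min (s ^ (p1 - 1)) (s ^ (p2 - 1))) ∧
    MonotoneOn (fun s => f s / s) (Ioi (0:ℝ)) ∧
    AntitoneOn (fun s => Fprim f s / s ^ p2) (Ioi (0:ℝ)) ∧
    ¬ ∃ η > 2, MonotoneOn (fun s => Fprim f s / s ^ η) (Ioi (0:ℝ)) := by
  subst hf
  have hp20 : (0:ℝ) < p2 - 2 := by linarith
  have hp21 : (0:ℝ) < p2 - 1 := by linarith
  set E : ℝ → ℝ := fun s => |s| ^ (p2 - 1) / (1 + |s| ^ (p2 - 2)) with hE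
  -- basic facts
  have hdenpos : ∀ s : ℝ, (0:ℝ) < 1 + |s| ^ (p2 - 2) := by
    intro s
    have : (0:ℝ) ≤ |s| ^ (p2 - 2) := Real.rpow_nonneg (abs_nonneg s) _
    linarith
  have hval : ∀ s : ℝ, 0 < s → E s = s ^ (p2 - 1) / (1 + s ^ (p2 - 2)) := by
    intro s hs
    simp [hE, abs_of_pos hs]
  have hcont : Continuous E := by
    apply Continuous.div
    · exact continuous_abs.rpow_const (fun x => Or.inr hp21.le)
    · exact continuous_const.add (continuous_abs.rpow_const (fun x => Or.inr hp20.le))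
    · exact fun x => (hdenpos x).ne'
  have hdenpos' : ∀ s : ℝ, 0 < s → (0:ℝ) < 1 + s ^ (p2 - 2) := by
    intro s hs
    have : (0:ℝ) ≤ s ^ (p2 - 2) := Real.rpow_nonneg hs.le _
    linarith
  -- f t ≤ t for t ≥ 0
  have hfle : ∀ t : ℝ, 0 ≤ t → E t ≤ t := by
    intro t ht
    rcases eq_or_lt_of_le ht with h | h
    · simp [hE, ← h, Real.zero_rpow hp21.ne']
    · rw [hval t h, div_le_iff₀ (hdenpos' t h)]
      have h1 : t ^ (p2 - 1) = t * t ^ (p2 - 2) := by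
        have e := Real.rpow_add h 1 (p2 - 2)
        rw [Real.rpow_one] at e
        rw [← e]; ring_nf
      nlinarith [Real.rpow_nonneg h.le (p2 - 2), h.le]
  -- Part (i)
  have part1 : ∀ p1 : ℝ, 2 < p1 → p1 < p2 → ∀ s : ℝ, 0 < s →
      0 < E s ∧ E s ≤ min (s ^ (p1 - 1)) (s ^ (p2 - 1)) := by
    intro p1 hp1 hp1p2 s hs
    rw [hval s hs]
    constructor
    · exact div_pos (Real.rpow_pos_of_pos hs _) (hdenpos' s hs)
    · refine le_min ?_ ?_
      · rw [div_le_iff₀ (hdenpos' s hs)]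
        have hsum : s ^ (p1 - 1) * (1 + s ^ (p2 - 2)) =
            s ^ (p1 - 1) + s ^ (p1 + p2 - 3) := by
          rw [mul_add, mul_one, ← Real.rpow_add hs]
          ring_nf
        rw [hsum]
        rcases le_total s 1 with h1 | h1
        · have : s ^ (p2 - 1) ≤ s ^ (p1 - 1) :=
            Real.rpow_le_rpow_of_exponent_ge hs h1 (by linarith)
          nlinarith [Real.rpow_nonneg hs.le (p1 + p2 - 3)]
        · have : s ^ (p2 - 1) ≤ s ^ (p1 + p2 - 3) :=
            Real.rpow_le_rpow_of_exponent_le h1 (by linarith)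
          nlinarith [Real.rpow_nonneg hs.le (p1 - 1)]
      · exact div_le_self (Real.rpow_nonneg hs.le _) (by
          have : (0:ℝ) ≤ s ^ (p2 - 2) := Real.rpow_nonneg hs.le _
          linarith)
  -- Part (ii)
  have hquot : ∀ s : ℝ, 0 < s → E s / s = s ^ (p2 - 2) / (1 + s ^ (p2 - 2)) := by
    intro s hs
    rw [hval s hs]
    have h1 : s ^ (p2 - 1) = s ^ (p2 - 2) * s := by
      have e := Real.rpow_add hs (p2 - 2) 1
      rw [Real.rpow_one] at e
      rw [← e]; ring_nf
    rw [h1, mul_div_right_comm, mul_div_assoc, div_self hs.ne', mul_one]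
  have part2 : MonotoneOn (fun s => E s / s) (Ioi (0:ℝ)) := by
    intro a ha b hb hab
    simp only
    rw [hquot a ha, hquot b hb]
    have hx : a ^ (p2 - 2) ≤ b ^ (p2 - 2) :=
      Real.rpow_le_rpow (le_of_lt ha) hab hp20.le
    have hxa : (0:ℝ) ≤ a ^ (p2 - 2) := Real.rpow_nonneg ha.le _
    rw [div_le_div_iff₀ (hdenpos' a ha) (hdenpos' b hb)]
    nlinarith
  -- Key rewriting of F(s)/s^p2 as an integral with antitone integrand
  have hkey : ∀ s : ℝ, 0 < s → Fprim E s / s ^ p2 =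
      ∫ u in (0:ℝ)..1, u ^ (p2 - 1) / (1 + (s * u) ^ (p2 - 2)) := by
    intro s hs
    have hF : Fprim E s = s * ∫ u in (0:ℝ)..1, E (s * u) := by
      rw [intervalIntegral.integral_comp_mul_left E hs.ne']
      simp [Fprim, smul_eq_mul]
      rw [← mul_assoc, mul_inv_cancel₀ hs.ne', one_mul]
    have hsp : s ^ p2 = s * s ^ (p2 - 1) := by
      have e := Real.rpow_add hs 1 (p2 - 1)
      rw [Real.rpow_one] at e
      rw [← e]; ring_nf
    rw [hF, hsp]
    have hsne : s ≠ 0 := hs.ne'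
    have hspne : s ^ (p2 - 1) ≠ 0 := (Real.rpow_pos_of_pos hs _).ne'
    rw [mul_div_mul_left _ _ hsne, ← intervalIntegral.integral_div]
    apply intervalIntegral.integral_congr
    intro u hu
    rw [uIcc_of_le (by norm_num : (0:ℝ) ≤ 1)] at hu
    have hu0 : 0 ≤ u := hu.1
    have hsu : 0 ≤ s * u := mul_nonneg hs.le hu0
    simp only [hE, abs_of_nonneg hsu]
    rw [Real.mul_rpow hs.le hu0]
    have hDne : (1 + (s*u) ^ (p2-2)) ≠ 0 := by
      have : (0:ℝ) ≤ (s*u) ^ (p2-2) := Real.rpow_nonneg hsu _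
      positivity
    field_simp
  -- integrability of the integrand
  have hint : ∀ s : ℝ, 0 < s →
      IntervalIntegrable (fun u => u ^ (p2 - 1) / (1 + (s * u) ^ (p2 - 2)))
        MeasureTheory.volume 0 1 := by
    intro s hs
    apply ContinuousOn.intervalIntegrable
    apply ContinuousOn.div
    · exact (continuous_id.rpow_const (fun x => Or.inr hp21.le)).continuousOn
    · exact (continuous_const.add ((continuous_const.mul continuous_id).rpow_const
        (fun x => Or.inr hp20.le))).continuousOn
    · intro u hu
      rw [uIcc_of_le (by norm_num : (0:ℝ) ≤ 1)] at hu
      have : (0:ℝ) ≤ (s * u) ^ (p2 - 2) :=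
        Real.rpow_nonneg (mul_nonneg hs.le hu.1) _
      positivity
  -- Part (iii)
  have part3 : AntitoneOn (fun s => Fprim E s / s ^ p2) (Ioi (0:ℝ)) := by
    intro a ha b hb hab
    simp only
    rw [hkey a ha, hkey b hb]
    apply intervalIntegral.integral_mono_on (by norm_num : (0:ℝ) ≤ 1)
      (hint b hb) (hint a ha)
    intro u hu
    have hu0 : 0 ≤ u := hu.1
    have h1 : (a * u) ^ (p2 - 2) ≤ (b * u) ^ (p2 - 2) :=
      Real.rpow_le_rpow (mul_nonneg (le_of_lt ha) hu0)
        (mul_le_mul_of_nonneg_right hab hu0) hp20.le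
    apply div_le_div_of_nonneg_left (Real.rpow_nonneg hu0 _)
      (by have : (0:ℝ) ≤ (a*u) ^ (p2-2) := Real.rpow_nonneg (mul_nonneg ha.le hu0) _
          linarith)
      (by linarith)
  refine ⟨part1, part2, part3, ?_⟩
  -- Part (iv)
  rintro ⟨η, hη, hmono⟩
  have hF1 : 0 < Fprim E 1 := by
    apply intervalIntegral.intervalIntegral_pos_of_pos_on
      (hcont.intervalIntegrable 0 1)
    · intro x hx
      exact (part1 ((2 + p2)/2) (by linarith) (by linarith) x hx.1).1
    · norm_num
  have hFquad : ∀ s : ℝ, 0 < s → Fprim E s ≤ s ^ 2 / 2 := by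
    intro s hs
    have : Fprim E s ≤ ∫ t in (0:ℝ)..s, t := by
      apply intervalIntegral.integral_mono_on hs.le
        (hcont.intervalIntegrable 0 s)
        (continuous_id.intervalIntegrable 0 s)
      intro t ht
      exact hfle t ht.1
    rwa [integral_id, zero_pow (by norm_num), sub_zero] at this
  -- choose a large s
  obtain ⟨s, hs1, hs2⟩ : ∃ s : ℝ, 1 ≤ s ∧ 1 / (2 * Fprim E 1) < s ^ (η - 2) := by
    refine ⟨max 1 (1 / (2 * Fprim E 1) + 1), le_max_left _ _, ?_⟩
    have h1 : (1:ℝ) ≤ max 1 (1 / (2 * Fprim E 1) + 1) := le_max_left _ _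
    have h2 : 1 / (2 * Fprim E 1) < max 1 (1 / (2 * Fprim E 1) + 1) :=
      lt_of_lt_of_le (by linarith) (le_max_right _ _)
    exact lt_of_lt_of_le h2 (le_self_pow₀ h1 (by omega))
  have hs0 : (0:ℝ) < s := by linarith
  have hmon := hmono (mem_Ioi.mpr one_pos) (mem_Ioi.mpr hs0) hs1
  simp only [one_pow, div_one] at hmon
  have hgrow : Fprim E 1 * s ^ η ≤ Fprim E s := by
    rw [← le_div_iff₀ (pow_pos hs0 η)]
    exact hmon
  have hsplit : s ^ η = s ^ (η - 2) * s ^ 2 := by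
    rw [← pow_add]
    congr 1
    omega
  have hs2pos : (0:ℝ) < s ^ 2 := by positivity
  have := hFquad s hs0
  rw [hsplit] at hgrow
  have hbig : (1:ℝ)/2 < Fprim E 1 * s ^ (η - 2) := by
    rw [div_lt_iff₀ (by linarith : (0:ℝ) < 2*Fprim E 1)] at hs2
    · nlinarith
  nlinarith
end
end
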